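/- On the half-space model of hyperbolic n-space, let T = (x₁/√(1+s²))(∂₁ + s ∂ₙ) where s = xₙ/x₁ is treated as the constant value on a fiber. Then, with respect to the hyperbolic Levi-Civita connection, ∇_T T = (x₁ xₙ/(x₁² + xₙ²))(xₙ ∂₁ - x₁ ∂ₙ). -/

import Mathlib

/-!
With `v = ∂₁ + s ∂ₙ` and `c = √(1 + s²) = |v|`, the field `T y = (y₁ / c) v` is linear in `y`, so
`∇ᴱ_T T = (x₁ / c²) v`; moreover `T(γ) = -1 / c` and `⟨T, T⟩ = x₁²`. Hence
`∇_T T = x₁ ∂₁ - (x₁ / c²) v = (x₁ s / c²)(s ∂₁ - ∂ₙ)`, which is the claimed vector on the fiber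
`xₙ = s x₁`.
-/

open Real

section EuclideanCoordinates

variable {ι : Type*} [Fintype ι]

theorem fderiv_neg_log_apply_apply {x : EuclideanSpace ℝ ι} {i : ι} (hx : x i ≠ 0)
    (h : EuclideanSpace ℝ ι) :
    fderiv ℝ (fun y : EuclideanSpace ℝ ι => -log (y i)) x h = -(h i / x i) := by
  have hd : HasFDerivAt (fun y : EuclideanSpace ℝ ι => -log (y i))
      (-((x i)⁻¹ • EuclideanSpace.proj (𝕜 := ℝ) i)) x :=
    ((EuclideanSpace.proj (𝕜 := ℝ) i).hasFDerivAt.log hx).neg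
  rw [hd.fderiv]
  simp [div_eq_inv_mul]

theorem fderiv_apply_div_smul_apply (i : ι) (a : ℝ) (v x h : EuclideanSpace ℝ ι) :
    fderiv ℝ (fun y : EuclideanSpace ℝ ι => (y i / a) • v) x h = (h i / a) • v := by
  have hlin : (fun y : EuclideanSpace ℝ ι => (y i / a) • v)
      = ⇑((a⁻¹ • EuclideanSpace.proj (𝕜 := ℝ) i).smulRight v) := by
    ext1 y
    simp [div_eq_inv_mul]
  rw [hlin, ContinuousLinearMap.fderiv]
  simp [div_eq_inv_mul]

theorem inner_self_single_add_smul_single [DecidableEq ι] {i j : ι} (hij : i ≠ j) (s : ℝ) :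
    inner ℝ (EuclideanSpace.single i (1 : ℝ) + s • EuclideanSpace.single j 1)
      (EuclideanSpace.single i (1 : ℝ) + s • EuclideanSpace.single j 1) = 1 + s ^ 2 := by
  simp only [inner_add_left, inner_add_right, real_inner_smul_left, real_inner_smul_right,
    EuclideanSpace.inner_single_left, PiLp.smul_apply, PiLp.single_apply,
    if_neg hij, if_neg hij.symm, if_pos, map_one, smul_eq_mul]
  ring

end EuclideanCoordinates

theorem stmt12 (n : ℕ) (hn : 2 ≤ n) (s : ℝ)
    (x : EuclideanSpace ℝ (Fin n)) (hx1 : 0 < x ⟨0, by omega⟩)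
    (hfib : x ⟨n-1, by omega⟩ = s * x ⟨0, by omega⟩) :
    let i1 : Fin n := ⟨0, by omega⟩
    let iN : Fin n := ⟨n-1, by omega⟩
    let γf : EuclideanSpace ℝ (Fin n) → ℝ := fun y => -Real.log (y i1)
    let T : EuclideanSpace ℝ (Fin n) → EuclideanSpace ℝ (Fin n) :=
      fun y => (y i1 / Real.sqrt (1+s^2)) •
        (EuclideanSpace.single i1 (1:ℝ) + s • EuclideanSpace.single iN (1:ℝ))
    -- ∇_T T computed via ∇_X Y = ∇ᴱ_X Y + X(γ)Y + Y(γ)X + x₁⁻¹⟨X,Y⟩∂₁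
    fderiv ℝ T x (T x) + (fderiv ℝ γf x (T x)) • T x + (fderiv ℝ γf x (T x)) • T x
      + ((x i1)⁻¹ * (inner ℝ (T x) (T x) : ℝ)) • EuclideanSpace.single i1 (1:ℝ)
      = ((x i1 * x iN) / ((x i1)^2 + (x iN)^2)) •
        ((x iN) • EuclideanSpace.single i1 (1:ℝ)
          - (x i1) • EuclideanSpace.single iN (1:ℝ)) := by
  intro i1 iN γf T
  have hne : i1 ≠ iN := Fin.ne_of_val_ne (by simp [i1, iN]; omega)
  have ha : x i1 ≠ 0 := hx1.ne'
  set c := √(1 + s ^ 2)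
  have hc2 : c ^ 2 = 1 + s ^ 2 := sq_sqrt (by positivity)
  have hc : c ≠ 0 := (sqrt_pos.mpr (by positivity)).ne'
  set v := EuclideanSpace.single i1 (1:ℝ) + s • EuclideanSpace.single iN (1:ℝ)
  have hTx : T x = (x i1 / c) • v := rfl
  have hTx1 : T x i1 = x i1 / c := by simp [hTx, v, hne]
  have hDT : fderiv ℝ T x (T x) = (x i1 / c / c) • v := by
    rw [fderiv_apply_div_smul_apply, hTx1]
  have hDγ : fderiv ℝ γf x (T x) = -(1 / c) := by
    rw [show fderiv ℝ γf x (T x) = -(T x i1 / x i1) from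
      fderiv_neg_log_apply_apply ha (T x), hTx1]
    field_simp
  have hTT : inner ℝ (T x) (T x) = x i1 ^ 2 := by
    rw [hTx, real_inner_smul_left, real_inner_smul_right,
      inner_self_single_add_smul_single hne, ← hc2]
    field_simp
  rw [hDT, hDγ, hTT, hTx, hfib]
  simp only [v, smul_add, smul_smul, smul_sub]
  match_scalars <;> field_simp
  · linear_combination x i1 ^ 2 * hc2
  · linear_combination s * x i1 ^ 2 * hc2
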